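/- arXiv:2403.05745 — 6 statements merged into one kernel-verified Lean document; each statement's English description precedes it below -/
import Mathlib

section
/- Let X be a real random variable with X ≤ 1 a.s. and E[X] ≤ 0. Then for all γ ≥ 0, E[e^{γX}] ≤ e^{(e^γ − 1 − γ)·Var(X)}. -/
open MeasureTheory ProbabilityTheory Real Set

/-!
With `φ t = exp t - 1 - t` and `m = E[X]`, write
`exp (γ X) = exp (γ m) (1 + γ (X - m)) + exp (γ m) φ (γ (X - m))`.
The first term is the tangent line at `m` and integrates to `exp (γ m) ≤ 1`; it remains to
bound `exp (γ m) φ (γ u) ≤ u² φ γ` for `u = X - m ≤ 1 - m`. For `u ≤ 1` this follows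
from `exp (γ m) ≤ 1` and the monotonicity of `φ t / t²`; for `u > 1` from
`exp (γ m) ≤ exp (γ (1 - u))` and the antitonicity of `exp (-t) φ t / t²`.
Integrating gives `E[exp (γ X)] ≤ 1 + φ γ Var X ≤ exp (φ γ Var X)`.
-/

theorem monotoneOn_div_sq_of_two_mul_le {f f' : ℝ → ℝ}
    (hf : ∀ x, 0 < x → HasDerivAt f (f' x) x) (h : ∀ x, 0 < x → 2 * f x ≤ x * f' x) :
    MonotoneOn (fun x => f x / x ^ 2) (Ioi 0) := by
  have hquot : ∀ x ∈ Ioi (0 : ℝ), HasDerivAt (fun x => f x / x ^ 2)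
      (x * (x * f' x - 2 * f x) / (x ^ 2) ^ 2) x := fun x hx =>
    ((hf x hx).fun_div (hasDerivAt_pow 2 x) (pow_ne_zero 2 (ne_of_gt hx))).congr_deriv
      (by norm_num; ring)
  refine monotoneOn_of_hasDerivWithinAt_nonneg (convex_Ioi 0)
    (f' := fun x => x * (x * f' x - 2 * f x) / (x ^ 2) ^ 2)
    (fun x hx => (hquot x hx).continuousAt.continuousWithinAt) (fun x hx => ?_) fun x hx => ?_
  · rw [interior_Ioi] at hx ⊢
    exact (hquot x hx).hasDerivWithinAt
  · have hx : 0 < x := by rwa [interior_Ioi] at hx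
    exact div_nonneg (by nlinarith [h x hx]) (by positivity)

theorem exp_le_one_add_add_sq_div_two_of_nonpos {x : ℝ} (hx : x ≤ 0) :
    exp x ≤ 1 + x + x ^ 2 / 2 := by
  have hmono : Monotone fun t => exp t - 1 - t - t ^ 2 / 2 :=
    monotone_of_hasDerivAt_nonneg (f' := fun t => exp t - 1 - t)
      (fun t => ((((hasDerivAt_exp t).sub_const 1).fun_sub (hasDerivAt_id' t)).fun_sub
        ((hasDerivAt_pow 2 t).div_const 2)).congr_deriv (by norm_num))
      fun t => by simp only [Pi.zero_apply]; linarith [add_one_le_exp t]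
  have := hmono hx
  simp only [exp_zero] at this
  linarith

theorem two_mul_exp_sub_one_sub_le {x : ℝ} (hx : 0 ≤ x) :
    2 * (exp x - 1 - x) ≤ x * (exp x - 1) := by
  have hmono : Monotone fun t => t * (exp t - 1) - 2 * (exp t - 1 - t) := by
    refine monotone_of_hasDerivAt_nonneg (f' := fun t => (t - 1) * exp t + 1)
      (fun t => (((hasDerivAt_id' t).fun_mul ((hasDerivAt_exp t).sub_const 1)).fun_sub
        ((((hasDerivAt_exp t).sub_const 1).fun_sub (hasDerivAt_id' t)).const_mul 2)).congr_deriv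
          (by ring)) fun t => ?_
    have h := mul_le_mul_of_nonneg_right (by linarith [add_one_le_exp (-t)] : 1 - t ≤ exp (-t))
      (exp_pos t).le
    rw [← exp_add, neg_add_cancel, exp_zero] at h
    simp only [Pi.zero_apply]; linarith
  simpa using hmono hx

theorem monotoneOn_exp_sub_one_sub_div_sq :
    MonotoneOn (fun x => (exp x - 1 - x) / x ^ 2) (Ioi 0) :=
  monotoneOn_div_sq_of_two_mul_le (f' := fun x => exp x - 1)
    (fun x _ => ((hasDerivAt_exp x).sub_const 1).fun_sub (hasDerivAt_id' x)
      |>.congr_deriv (by ring))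
    fun _ hx => two_mul_exp_sub_one_sub_le hx.le

theorem antitoneOn_one_sub_one_add_mul_exp_neg_div_sq :
    AntitoneOn (fun x => (1 - (1 + x) * exp (-x)) / x ^ 2) (Ioi 0) := by
  have hmono : MonotoneOn (fun x => ((1 + x) * exp (-x) - 1) / x ^ 2) (Ioi 0) := by
    refine monotoneOn_div_sq_of_two_mul_le (f' := fun x => -(x * exp (-x)))
      (fun x _ => ((((hasDerivAt_id' x).const_add 1).fun_mul (hasDerivAt_neg x).exp).sub_const
        1).congr_deriv (by ring)) fun x hx => ?_
    have h := mul_le_mul_of_nonneg_right (quadratic_le_exp_of_nonneg hx.le) (exp_pos (-x)).le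
    rw [← exp_add, add_neg_cancel, exp_zero] at h
    nlinarith
  intro a ha b hb hab
  have := hmono ha hb hab
  simp only [← neg_sub (1 : ℝ), neg_div] at this ⊢
  linarith

theorem exp_mul_sub_one_sub_le_sq_mul {γ u : ℝ} (hγ : 0 ≤ γ) (hu : u ≤ 1) :
    exp (γ * u) - 1 - γ * u ≤ u ^ 2 * (exp γ - 1 - γ) := by
  rcases le_or_gt u 0 with hu0 | hu0
  · have := exp_le_one_add_add_sq_div_two_of_nonpos (mul_nonpos_of_nonneg_of_nonpos hγ hu0)
    calc exp (γ * u) - 1 - γ * u ≤ u ^ 2 * (γ ^ 2 / 2) := by linarith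
      _ ≤ u ^ 2 * (exp γ - 1 - γ) := by gcongr; linarith [quadratic_le_exp_of_nonneg hγ]
  rcases hγ.eq_or_lt with rfl | hγ0
  · simp
  have hmono := monotoneOn_exp_sub_one_sub_div_sq (mul_pos hγ0 hu0) hγ0
    (mul_le_of_le_one_right hγ hu)
  rw [div_le_div_iff₀ (by positivity) (by positivity)] at hmono
  refine le_of_mul_le_mul_right ?_ (pow_pos hγ0 2)
  linarith

theorem exp_mul_one_sub_mul_exp_mul_sub_one_sub_le_sq_mul {γ u : ℝ} (hγ : 0 ≤ γ)
    (hu : 1 ≤ u) :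
    exp (γ * (1 - u)) * (exp (γ * u) - 1 - γ * u) ≤ u ^ 2 * (exp γ - 1 - γ) := by
  rcases hγ.eq_or_lt with rfl | hγ0
  · simp
  have hanti := antitoneOn_one_sub_one_add_mul_exp_neg_div_sq hγ0 (mul_pos hγ0 (by linarith))
    (le_mul_of_one_le_right hγ hu)
  have hnumerator : ∀ t, 1 - (1 + t) * exp (-t) = exp (-t) * (exp t - 1 - t) := fun t => by
    rw [mul_sub, mul_sub, ← exp_add, neg_add_cancel, exp_zero]; ring
  simp only [hnumerator] at hanti
  rw [div_le_div_iff₀ (by positivity) (by positivity)] at hanti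
  refine le_of_mul_le_mul_right ?_ (pow_pos hγ0 2)
  calc exp (γ * (1 - u)) * (exp (γ * u) - 1 - γ * u) * γ ^ 2
      = exp γ * (exp (-(γ * u)) * (exp (γ * u) - 1 - γ * u) * γ ^ 2) := by
        rw [show γ * (1 - u) = γ + -(γ * u) by ring, exp_add]; ring
    _ ≤ exp γ * (exp (-γ) * (exp γ - 1 - γ) * (γ * u) ^ 2) := by gcongr
    _ = u ^ 2 * (exp γ - 1 - γ) * γ ^ 2 := by
        rw [← mul_assoc, ← mul_assoc, ← exp_add, add_neg_cancel, exp_zero]; ring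

theorem exp_mul_le_tangent_add_sq_of_le_one {γ m x : ℝ} (hγ : 0 ≤ γ) (hm : m ≤ 0)
    (hx : x ≤ 1) :
    exp (γ * x) ≤ exp (γ * m) * (1 + γ * (x - m)) + (exp γ - 1 - γ) * (x - m) ^ 2 := by
  suffices h : exp (γ * m) * (exp (γ * (x - m)) - 1 - γ * (x - m)) ≤
      (exp γ - 1 - γ) * (x - m) ^ 2 by
    rw [show γ * x = γ * m + γ * (x - m) by ring, exp_add]
    linarith
  have hrem : 0 ≤ exp (γ * (x - m)) - 1 - γ * (x - m) := by
    linarith [add_one_le_exp (γ * (x - m))]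
  rw [mul_comm (exp γ - 1 - γ)]
  rcases le_or_gt (x - m) 1 with hu | hu
  · calc exp (γ * m) * (exp (γ * (x - m)) - 1 - γ * (x - m))
        ≤ 1 * (exp (γ * (x - m)) - 1 - γ * (x - m)) := by
          gcongr; exact exp_le_one_iff.2 (mul_nonpos_of_nonneg_of_nonpos hγ hm)
      _ ≤ (x - m) ^ 2 * (exp γ - 1 - γ) := by
          rw [one_mul]; exact exp_mul_sub_one_sub_le_sq_mul hγ hu
  · calc exp (γ * m) * (exp (γ * (x - m)) - 1 - γ * (x - m))
        ≤ exp (γ * (1 - (x - m))) * (exp (γ * (x - m)) - 1 - γ * (x - m)) := by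
          gcongr; linarith
      _ ≤ (x - m) ^ 2 * (exp γ - 1 - γ) :=
          exp_mul_one_sub_mul_exp_mul_sub_one_sub_le_sq_mul hγ hu.le

theorem integral_exp_mul_le_add_variance {Ω : Type*} {m0 : MeasurableSpace Ω}
    {μ : Measure Ω} [IsProbabilityMeasure μ] {X : Ω → ℝ} (hX : MemLp X 2 μ)
    (hbdd : ∀ᵐ ω ∂μ, X ω ≤ 1) (hmean : μ[X] ≤ 0) {γ : ℝ} (hγ : 0 ≤ γ) :
    ∫ ω, exp (γ * X ω) ∂μ ≤ exp (γ * μ[X]) + (exp γ - 1 - γ) * Var[X; μ] := by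
  have hX1 : Integrable X μ := hX.integrable one_le_two
  have hcentered : Integrable (fun ω => X ω - μ[X]) μ := hX1.sub (integrable_const _)
  have hlin : Integrable (fun ω => 1 + γ * (X ω - μ[X])) μ :=
    (integrable_const 1).add (hcentered.const_mul γ)
  have hsq : Integrable (fun ω => (X ω - μ[X]) ^ 2) μ :=
    (hX.sub (memLp_const (μ[X]))).integrable_sq
  have hlin_integral : ∫ ω, (1 + γ * (X ω - μ[X])) ∂μ = 1 := by
    rw [integral_add (integrable_const 1) (hcentered.const_mul γ), integral_const_mul,
      integral_sub hX1 (integrable_const _)]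
    simp
  calc ∫ ω, exp (γ * X ω) ∂μ
      ≤ ∫ ω, (exp (γ * μ[X]) * (1 + γ * (X ω - μ[X])) +
          (exp γ - 1 - γ) * (X ω - μ[X]) ^ 2) ∂μ :=
        integral_mono_of_nonneg (ae_of_all _ fun _ => (exp_pos _).le)
          ((hlin.const_mul _).add (hsq.const_mul _))
          (hbdd.mono fun _ hω => exp_mul_le_tangent_add_sq_of_le_one hγ hmean hω)
    _ = exp (γ * μ[X]) + (exp γ - 1 - γ) * Var[X; μ] := by
        rw [integral_add (hlin.const_mul _) (hsq.const_mul _), integral_const_mul,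
          integral_const_mul, hlin_integral, mul_one,
          variance_eq_integral hX.aestronglyMeasurable.aemeasurable]

theorem mgf_bound_general
    {Ω : Type*} {m0 : MeasurableSpace Ω} {μ : Measure Ω} [IsProbabilityMeasure μ]
    (X : Ω → ℝ) (hX : MeasureTheory.MemLp X 2 μ)
    (hbdd : ∀ᵐ ω ∂μ, X ω ≤ 1) (hmean : ∫ ω, X ω ∂μ ≤ 0)
    (γ : ℝ) (hγ : 0 ≤ γ) :
    ∫ ω, Real.exp (γ * X ω) ∂μ ≤ Real.exp ((Real.exp γ - 1 - γ) * ProbabilityTheory.variance X μ) := by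
  calc ∫ ω, exp (γ * X ω) ∂μ
      ≤ exp (γ * μ[X]) + (exp γ - 1 - γ) * Var[X; μ] :=
        integral_exp_mul_le_add_variance hX hbdd hmean hγ
    _ ≤ 1 + (exp γ - 1 - γ) * Var[X; μ] := by
        gcongr; exact exp_le_one_iff.2 (mul_nonpos_of_nonneg_of_nonpos hγ hmean)
    _ ≤ exp ((exp γ - 1 - γ) * Var[X; μ]) := by
        linarith [add_one_le_exp ((exp γ - 1 - γ) * Var[X; μ])]

/-- MGF bound: if `X ≤ 1` a.s. and `E[X] ≤ 0`, then for all `γ ≥ 0`,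
`E[e^{γX}] ≤ e^{(e^γ − 1 − γ)·Var(X)}`. -/
theorem mgf_bound
    {Ω : Type*} {m0 : MeasurableSpace Ω} {μ : Measure Ω} [IsProbabilityMeasure μ]
    (X : Ω → ℝ) (hX : MeasureTheory.MemLp X 2 μ)
    (hbdd : ∀ᵐ ω ∂μ, X ω ≤ 1) (hmean : ∫ ω, X ω ∂μ ≤ 0)
    (γ : ℝ) (hγ : 0 ≤ γ)
    (hint : Integrable (fun ω => Real.exp (γ * X ω)) μ) :
    ∫ ω, Real.exp (γ * X ω) ∂μ ≤ Real.exp ((Real.exp γ - 1 - γ) * ProbabilityTheory.variance X μ) :=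
  mgf_bound_general (m0 := m0) X hX hbdd hmean γ hγ
end

section
/- Safety via Ville's inequality (DTCBF case): Suppose h(x_k) ≤ B a.s. for all k, with B > 0, and E[h(x_{k+1}) | F_k] ≥ α h(x_k) for some α ∈ (0,1) and all k ≤ K, with x_0 deterministic and h(x_0) ≥ 0. Then P(∃ k ≤ K, h(x_k) < 0) ≤ 1 − α^K h(x_0)/B. -/
/-!
Dividing by `α ^ k` turns the DTCBF condition `α Y k ≤ E[Y (k+1) | ℱ k]` into the submartingale
property of `α ^ (-k) Y k`, frozen after time `K`. Optional stopping at the first time `τ ≤ K` with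
`Y τ < 0` gives `y0 ≤ E[α ^ (-τ) Y τ]`. The integrand is negative on the unsafe event and at most
`B α ^ (-K)` elsewhere, so `y0 ≤ B α ^ (-K) (1 - P(unsafe))`. This is Ville's inequality for the
nonnegative supermartingale `B α ^ (-K) - α ^ (-k) Y k`, proved directly by optional stopping.
-/

open MeasureTheory Filter

namespace MeasureTheory

variable {Ω : Type*} {m0 : MeasurableSpace Ω} {μ : Measure Ω}

noncomputable def discountedUpTo (α : ℝ) (K : ℕ) (Y : ℕ → Ω → ℝ) : ℕ → Ω → ℝ :=
  fun k ω => (α ^ min k K)⁻¹ * Y (min k K) ω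

theorem Submartingale.integral_zero_le_integral_stoppedValue {ℱ : Filtration ℕ m0}
    [SigmaFiniteFiltration μ ℱ] {f : ℕ → Ω → ℝ} {τ : Ω → ℕ∞}
    (hf : Submartingale f ℱ μ) (hτ : IsStoppingTime ℱ τ) {N : ℕ} (hbdd : ∀ ω, τ ω ≤ N) :
    ∫ ω, f 0 ω ∂μ ≤ ∫ ω, stoppedValue f τ ω ∂μ := by
  rw [← stoppedValue_const f 0]
  exact hf.expected_stoppedValue_mono (isStoppingTime_const ℱ 0) hτ (fun _ => bot_le) hbdd

section

variable {ℱ : Filtration ℕ m0} {Y : ℕ → Ω → ℝ} {α : ℝ} {K : ℕ}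

theorem Adapted.measurableSet_exists_le_lt (hY : Adapted ℱ Y) (K : ℕ) (c : ℝ) :
    MeasurableSet {ω | ∃ k ≤ K, Y k ω < c} := by
  have h_eq : {ω | ∃ k ≤ K, Y k ω < c} = ⋃ k ≤ K, {ω | Y k ω < c} := by ext; simp
  exact h_eq ▸ .iUnion fun k => .iUnion fun _ =>
    measurableSet_lt ((hY k).mono (ℱ.le k) le_rfl) measurable_const

theorem Adapted.discountedUpTo (hY : Adapted ℱ Y) : Adapted ℱ (discountedUpTo α K Y) :=
  fun k => ((hY (min k K)).mono (ℱ.mono (min_le_left k K)) le_rfl).const_mul _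

theorem integrable_discountedUpTo (hY : ∀ k, Integrable (Y k) μ) (k : ℕ) :
    Integrable (discountedUpTo α K Y k) μ :=
  (hY (min k K)).const_mul _

theorem discountedUpTo_of_le {k : ℕ} (hk : k ≤ K) (ω : Ω) :
    discountedUpTo α K Y k ω = (α ^ k)⁻¹ * Y k ω := by
  simp only [discountedUpTo, min_eq_left hk]

theorem discountedUpTo_succ_of_le {k : ℕ} (hk : K ≤ k) :
    discountedUpTo α K Y (k + 1) = discountedUpTo α K Y k := by
  ext ω
  simp only [discountedUpTo, min_eq_right hk, min_eq_right (hk.trans k.le_succ)]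

theorem submartingale_discountedUpTo [IsFiniteMeasure μ] (hY : Adapted ℱ Y)
    (hint : ∀ k, Integrable (Y k) μ) (hα : 0 < α)
    (hcbf : ∀ k < K, ∀ᵐ ω ∂μ, α * Y k ω ≤ μ[Y (k + 1) | ℱ k] ω) :
    Submartingale (discountedUpTo α K Y) ℱ μ := by
  have hadp := hY.discountedUpTo (α := α) (K := K)
  refine submartingale_nat hadp.stronglyAdapted (integrable_discountedUpTo hint) fun k => ?_
  rcases lt_or_ge k K with hk | hk
  · have hsucc : discountedUpTo α K Y (k + 1) = (α ^ (k + 1))⁻¹ • Y (k + 1) := by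
      ext ω; exact discountedUpTo_of_le hk ω
    filter_upwards [condExp_smul (μ := μ) (α ^ (k + 1))⁻¹ (Y (k + 1)) (ℱ k), hcbf k hk]
      with ω hsmul hω
    rw [hsucc, hsmul, Pi.smul_apply, smul_eq_mul, discountedUpTo_of_le hk.le,
      pow_succ, mul_inv, mul_assoc]
    gcongr
    rwa [le_inv_mul_iff₀ hα]
  · rw [discountedUpTo_succ_of_le hk, condExp_of_stronglyMeasurable (ℱ.le k)
      (hadp.stronglyAdapted k) (integrable_discountedUpTo hint k)]

theorem discountedUpTo_hittingBtwn_le_indicator (hα : 0 < α) (hα1 : α ≤ 1) {B : ℝ} {ω : Ω}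
    (hB : ∀ k, Y k ω ≤ B) :
    discountedUpTo α K Y (hittingBtwn Y (Set.Iio 0) 0 K ω) ω ≤
      {ω | ∃ k ≤ K, Y k ω < 0}ᶜ.indicator (fun _ => B / α ^ K) ω := by
  set τ := hittingBtwn Y (Set.Iio 0) 0 K ω
  have hτK : τ ≤ K := hittingBtwn_le ω
  rw [discountedUpTo_of_le hτK]
  by_cases hω : ω ∈ {ω | ∃ k ≤ K, Y k ω < 0}ᶜ
  · have hnonneg : 0 ≤ Y τ ω := not_lt.1 fun h => hω ⟨τ, hτK, h⟩
    rw [Set.indicator_of_mem hω, ← inv_mul_eq_div]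
    exact mul_le_mul (inv_anti₀ (by positivity) (pow_le_pow_of_le_one hα.le hα1 hτK)) (hB τ)
      hnonneg (by positivity)
  · obtain ⟨k, hk, hYk⟩ := not_not.1 hω
    have hneg : Y τ ω < 0 :=
      stoppedValue_hittingBtwn_mem (u := Y) (s := Set.Iio 0) ⟨k, ⟨k.zero_le, hk⟩, hYk⟩
    rw [Set.indicator_of_notMem hω]
    exact mul_nonpos_of_nonneg_of_nonpos (by positivity) hneg.le

end

end MeasureTheory

theorem villes_safety_dtcbf_general
    {Ω : Type*} {m0 : MeasurableSpace Ω} {μ : Measure Ω} [IsProbabilityMeasure μ]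
    (ℱ : Filtration ℕ m0) (Y : ℕ → Ω → ℝ)
    (hadp : Adapted ℱ Y) (hint : ∀ k, Integrable (Y k) μ)
    (y0 : ℝ) (hY0 : Y 0 = fun _ => y0)
    (B : ℝ) (hB : 0 < B) (hbd : ∀ k : ℕ, ∀ᵐ ω ∂μ, Y k ω ≤ B)
    (K : ℕ)
    (α : ℝ) (hα : α ∈ Set.Ioo (0 : ℝ) 1)
    (hcbf : ∀ k ≤ K, ∀ᵐ ω ∂μ, α * Y k ω ≤ (μ[Y (k + 1) | ℱ k]) ω) :
    (μ {ω | ∃ k ≤ K, Y k ω < 0}).toReal ≤ 1 - α ^ K * y0 / B := by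
  obtain ⟨hα0, hα1⟩ := hα
  set A := {ω | ∃ k ≤ K, Y k ω < 0}
  have hA : MeasurableSet A := hadp.measurableSet_exists_le_lt K 0
  have hsub := submartingale_discountedUpTo hadp hint hα0 fun k hk => hcbf k hk.le
  set τ : Ω → ℕ := hittingBtwn Y (Set.Iio 0) 0 K
  have hτ : IsStoppingTime ℱ fun ω => (τ ω : ℕ∞) :=
    hadp.isStoppingTime_hittingBtwn measurableSet_Iio
  have hτK (ω : Ω) : (τ ω : ℕ∞) ≤ K := by exact_mod_cast (hittingBtwn_le ω : τ ω ≤ K)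
  have hstart : ∫ ω, discountedUpTo α K Y 0 ω ∂μ = y0 := by simp [discountedUpTo, hY0]
  have hstop := hstart ▸ hsub.integral_zero_le_integral_stoppedValue hτ hτK
  have hbound : ∫ ω, stoppedValue (discountedUpTo α K Y) (fun ω => τ ω) ω ∂μ ≤
      (1 - μ.real A) * B / α ^ K := by
    rw [← probReal_compl_eq_one_sub hA, mul_div_assoc, ← smul_eq_mul,
      ← integral_indicator_const _ hA.compl]
    refine integral_mono_ae (hsub.integrable_stoppedValue hτ hτK)
      ((integrable_const _).indicator hA.compl) ?_
    filter_upwards [ae_all_iff.2 hbd] with ω hω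
    exact discountedUpTo_hittingBtwn_le_indicator hα0 hα1.le hω
  have key := hstop.trans hbound
  rw [le_div_iff₀' (by positivity)] at key
  rw [← measureReal_def, le_sub_comm, div_le_iff₀ hB]
  exact key

/-- Safety via Ville's inequality, DTCBF case: if `h(x_k) ≤ B` a.s. and the DTCBF
expectation condition holds with `α ∈ (0,1)`, then
`P(∃ k ≤ K, h(x_k) < 0) ≤ 1 − α^K h(x_0)/B`. Here `Y k = h(x_k)`. -/
theorem villes_safety_dtcbf
    {Ω : Type*} {m0 : MeasurableSpace Ω} {μ : Measure Ω} [IsProbabilityMeasure μ]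
    (ℱ : Filtration ℕ m0) (Y : ℕ → Ω → ℝ)
    (hadp : Adapted ℱ Y) (hint : ∀ k, Integrable (Y k) μ)
    (y0 : ℝ) (hY0 : Y 0 = fun _ => y0) (hy0 : 0 ≤ y0)
    (B : ℝ) (hB : 0 < B) (hbd : ∀ k : ℕ, ∀ᵐ ω ∂μ, Y k ω ≤ B)
    (K : ℕ) (hK : 1 ≤ K)
    (α : ℝ) (hα : α ∈ Set.Ioo (0 : ℝ) 1)
    (hcbf : ∀ k ≤ K, ∀ᵐ ω ∂μ, α * Y k ω ≤ (μ[Y (k + 1) | ℱ k]) ω) :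
    (μ {ω | ∃ k ≤ K, Y k ω < 0}).toReal ≤ 1 - α ^ K * y0 / B :=
  villes_safety_dtcbf_general ℱ Y hadp hint y0 hY0 B hB hbd K α hα hcbf
end

section
/- Safety via Ville's inequality (c-martingale case): Suppose h(x_k) ≤ B a.s. for all k, with B > 0, and E[h(x_{k+1}) | F_k] ≥ h(x_k) − c for some c ≥ 0 and all k ≤ K, with x_0 deterministic. Then P(∃ k ≤ K, h(x_k) < 0) ≤ 1 − (h(x_0) − cK)/B. -/
/-!
With `Z k = h(x_k) + c k` frozen after time `K`, the drift condition makes `Z` a submartingale,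
so `W = B + c K - Z` is a supermartingale, nonnegative because `h ≤ B`. If `h(x_k) < 0` for some
`k ≤ K` then `W k ≥ B`, and Ville's inequality
`B · P(max_{k ≤ K} W k ≥ B) ≤ E[W 0] = B + c K - h(x_0)`,
obtained by optional stopping at the first time `W` reaches `B`, gives the bound.
-/

open MeasureTheory Filter

namespace MeasureTheory

variable {Ω : Type*} {m0 : MeasurableSpace Ω} {μ : Measure Ω} {ℱ : Filtration ℕ m0}

theorem Supermartingale.integral_stoppedValue_le [SigmaFiniteFiltration μ ℱ] {W : ℕ → Ω → ℝ}
    (hW : Supermartingale W ℱ μ) {τ : Ω → WithTop ℕ} (hτ : IsStoppingTime ℱ τ) {n : ℕ}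
    (hτn : ∀ ω, τ ω ≤ n) : ∫ ω, stoppedValue W τ ω ∂μ ≤ ∫ ω, W 0 ω ∂μ := by
  have h := hW.neg.expected_stoppedValue_mono (isStoppingTime_const ℱ 0) hτ
    (fun _ => zero_le) hτn
  simp only [stoppedValue_const] at h
  simpa [stoppedValue, integral_neg] using h

theorem Adapted.measurableSet_exists_le_ge {W : ℕ → Ω → ℝ} (hW : Adapted ℱ W) (a : ℝ) (n : ℕ) :
    MeasurableSet {ω | ∃ k ≤ n, a ≤ W k ω} := by
  simp only [Set.ofPred_exists]
  exact MeasurableSet.iUnion fun k => (MeasurableSet.const _).inter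
    (measurableSet_le measurable_const ((hW k).mono (ℱ.le k) le_rfl))

theorem Supermartingale.mul_measure_exists_ge_le [IsFiniteMeasure μ] {W : ℕ → Ω → ℝ}
    (hW : Supermartingale W ℱ μ) (hnonneg : ∀ k, 0 ≤ᵐ[μ] W k) (a : ℝ) (n : ℕ) :
    a * μ.real {ω | ∃ k ≤ n, a ≤ W k ω} ≤ ∫ ω, W 0 ω ∂μ := by
  have hadp : Adapted ℱ W := hW.stronglyAdapted.adapted
  set S := {ω | ∃ k ≤ n, a ≤ W k ω}
  set τ : Ω → WithTop ℕ := fun ω => (hittingBtwn W (Set.Ici a) 0 n ω : ℕ)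
  have hτ : IsStoppingTime ℱ τ := hadp.isStoppingTime_hittingBtwn measurableSet_Ici
  have hτn : ∀ ω, τ ω ≤ n := fun ω => WithTop.coe_le_coe.mpr (hittingBtwn_le ω)
  have hint : Integrable (stoppedValue W τ) μ := integrable_stoppedValue ℕ hτ hW.integrable hτn
  have hge : ∀ ω ∈ S, a ≤ stoppedValue W τ ω := fun ω ⟨k, hkn, hk⟩ =>
    stoppedValue_hittingBtwn_mem ⟨k, ⟨k.zero_le, hkn⟩, hk⟩
  have hnonneg_τ : 0 ≤ᵐ[μ] stoppedValue W τ := by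
    filter_upwards [ae_all_iff.2 hnonneg] with ω hω using hω _
  calc a * μ.real S ≤ ∫ ω in S, stoppedValue W τ ω ∂μ :=
        setIntegral_ge_of_const_le_real (hadp.measurableSet_exists_le_ge a n)
          (measure_ne_top μ S) hge hint.integrableOn
    _ ≤ ∫ ω, stoppedValue W τ ω ∂μ := setIntegral_le_integral hint hnonneg_τ
    _ ≤ ∫ ω, W 0 ω ∂μ := hW.integral_stoppedValue_le hτ hτn

theorem condExp_add_const {m : MeasurableSpace Ω} (hm : m ≤ m0) [IsFiniteMeasure μ]
    {g : Ω → ℝ} (hg : Integrable g μ) (b : ℝ) :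
    μ[fun ω => g ω + b | m] =ᵐ[μ] fun ω => μ[g | m] ω + b := by
  refine (condExp_add hg (integrable_const b) m).trans ?_
  rw [condExp_const hm]
  rfl

theorem submartingale_nat_min [IsFiniteMeasure μ] {f : ℕ → Ω → ℝ} (hadp : Adapted ℱ f)
    (hint : ∀ i, Integrable (f i) μ) {n : ℕ} (hf : ∀ i < n, f i ≤ᵐ[μ] μ[f (i + 1) | ℱ i]) :
    Submartingale (fun i => f (min i n)) ℱ μ := by
  have hadp_min : Adapted ℱ fun i => f (min i n) := fun i =>
    (hadp (min i n)).mono (ℱ.mono (min_le_left i n)) le_rfl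
  refine submartingale_nat hadp_min.stronglyAdapted (fun i => hint _) fun i => ?_
  rcases lt_or_ge i n with hi | hi
  · simpa only [min_eq_left hi.le, min_eq_left (Nat.succ_le_of_lt hi)] using hf i hi
  · rw [min_eq_right (hi.trans i.le_succ), condExp_of_stronglyMeasurable (ℱ.le i)
      ((hadp n).mono (ℱ.mono hi) le_rfl).stronglyMeasurable (hint n), min_eq_right hi]

theorem submartingale_add_drift_min [IsFiniteMeasure μ] {Y : ℕ → Ω → ℝ} (hadp : Adapted ℱ Y)
    (hint : ∀ i, Integrable (Y i) μ) {c : ℝ} {n : ℕ}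
    (hY : ∀ i < n, ∀ᵐ ω ∂μ, Y i ω - c ≤ μ[Y (i + 1) | ℱ i] ω) :
    Submartingale (fun i ω => Y (min i n) ω + c * (min i n : ℕ)) ℱ μ := by
  refine submartingale_nat_min (f := fun i ω => Y i ω + c * i)
    (fun i => (hadp i).add_const _) (fun i => (hint i).add (integrable_const _)) fun i hi => ?_
  filter_upwards [hY i hi, condExp_add_const (ℱ.le i) (hint (i + 1)) (c * (i + 1 : ℕ))]
    with ω hω hω'
  rw [hω']
  push_cast
  linarith

end MeasureTheory

theorem villes_safety_cmartingale_general
    {Ω : Type*} {m0 : MeasurableSpace Ω} {μ : Measure Ω} [IsProbabilityMeasure μ]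
    (ℱ : Filtration ℕ m0) (Y : ℕ → Ω → ℝ)
    (hadp : Adapted ℱ Y) (hint : ∀ k, Integrable (Y k) μ)
    (y0 : ℝ) (hY0 : Y 0 = fun _ => y0)
    (B : ℝ) (hB : 0 < B) (hbd : ∀ k : ℕ, ∀ᵐ ω ∂μ, Y k ω ≤ B)
    (K : ℕ)
    (c : ℝ) (hc : 0 ≤ c)
    (hmart : ∀ k ≤ K, ∀ᵐ ω ∂μ, Y k ω - c ≤ (μ[Y (k + 1) | ℱ k]) ω) :
    (μ {ω | ∃ k ≤ K, Y k ω < 0}).toReal ≤ 1 - (y0 - c * K) / B := by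
  set W : ℕ → Ω → ℝ := fun k ω => (B + c * K) - (Y (min k K) ω + c * (min k K : ℕ))
  have hW : Supermartingale W ℱ μ :=
    (martingale_const ℱ μ (B + c * K)).supermartingale.sub_submartingale
      (submartingale_add_drift_min hadp hint fun k hk => hmart k hk.le)
  have hW_nonneg : ∀ k, 0 ≤ᵐ[μ] W k := fun k => by
    filter_upwards [hbd (min k K)] with ω hω
    have : c * (min k K : ℕ) ≤ c * K := by gcongr; exact_mod_cast min_le_right k K
    simp only [W, Pi.zero_apply]
    linarith
  have hsub : {ω | ∃ k ≤ K, Y k ω < 0} ⊆ {ω | ∃ k ≤ K, B ≤ W k ω} := by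
    rintro ω ⟨k, hk, hYk⟩
    refine ⟨k, hk, ?_⟩
    have : c * k ≤ c * K := by gcongr
    simp only [W, min_eq_left hk]
    linarith
  have hW0 : ∫ ω, W 0 ω ∂μ = B + c * K - y0 := by simp [W, hY0]
  rw [← measureReal_def, show 1 - (y0 - c * K) / B = (B + c * K - y0) / B by field_simp; ring,
    le_div_iff₀ hB, mul_comm, ← hW0]
  calc B * μ.real {ω | ∃ k ≤ K, Y k ω < 0} ≤ B * μ.real {ω | ∃ k ≤ K, B ≤ W k ω} :=
        mul_le_mul_of_nonneg_left (measureReal_mono hsub) hB.le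
    _ ≤ ∫ ω, W 0 ω ∂μ := hW.mul_measure_exists_ge_le hW_nonneg B K

/-- Safety via Ville's inequality, c-martingale case: if `h(x_k) ≤ B` a.s. and the
c-martingale expectation condition holds with `c ≥ 0`, then
`P(∃ k ≤ K, h(x_k) < 0) ≤ 1 − (h(x_0) − cK)/B`. Here `Y k = h(x_k)`. -/
theorem villes_safety_cmartingale
    {Ω : Type*} {m0 : MeasurableSpace Ω} {μ : Measure Ω} [IsProbabilityMeasure μ]
    (ℱ : Filtration ℕ m0) (Y : ℕ → Ω → ℝ)
    (hadp : Adapted ℱ Y) (hint : ∀ k, Integrable (Y k) μ)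
    (y0 : ℝ) (hY0 : Y 0 = fun _ => y0)
    (B : ℝ) (hB : 0 < B) (hbd : ∀ k : ℕ, ∀ᵐ ω ∂μ, Y k ω ≤ B)
    (K : ℕ) (hK : 1 ≤ K)
    (c : ℝ) (hc : 0 ≤ c)
    (hmart : ∀ k ≤ K, ∀ᵐ ω ∂μ, Y k ω - c ≤ (μ[Y (k + 1) | ℱ k]) ω) :
    (μ {ω | ∃ k ≤ K, Y k ω < 0}).toReal ≤ 1 - (y0 - c * K) / B :=
  villes_safety_cmartingale_general ℱ Y hadp hint y0 hY0 B hB hbd K c hc hmart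
end

section
/- For real numbers σ, δ, B > 0, λ ≥ 0, K ≥ 1, define H(a, b) = (b²/(a+b²))^{a+b²} e^{a} and φ = 2 ln 2 − 1. If λδ ≥ σ²K and λ ≤ B − δ/φ, then H(λ/δ, σ√K/δ) ≤ 1 − λ/B. -/
/-!
Write `c = b²`. For `0 < c ≤ a` the bound is `H(a, b) = exp (a - (a + c) log ((a + c) / c))`,
and the estimate `(a + c) log ((a + c) / c) ≥ 2 a log 2` (equality at `c = a`) gives
`H(a, b) ≤ exp (-φ a) ≤ 1 / (1 + φ a)`. With `a = λ / δ` (and `c ≤ a` by `σ²K ≤ λδ`), the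
hypothesis `λ ≤ B - δ / φ`, i.e. `δ ≤ φ (B - λ)`, is exactly what makes
`1 / (1 + φ λ / δ) ≤ 1 - λ / B`.
-/

open Real

/-- Freedman bound `H(a, b) = (b²/(a+b²))^{a+b²} e^a`. -/
noncomputable def freedmanH (a b : ℝ) : ℝ :=
  (b ^ 2 / (a + b ^ 2)) ^ (a + b ^ 2) * Real.exp a

lemma freedmanH_eq_exp {a b : ℝ} (hb : b ≠ 0) (hab : 0 < a + b ^ 2) :
    freedmanH a b = exp (a + (a + b ^ 2) * log (b ^ 2 / (a + b ^ 2))) := by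
  rw [freedmanH, rpow_def_of_pos (by positivity), ← exp_add]
  ring_nf

lemma two_mul_mul_log_two_le {a c : ℝ} (hc : 0 < c) (hca : c ≤ a) :
    2 * a * log 2 ≤ (a + c) * log ((a + c) / c) := by
  have hac : 0 < a + c := by linarith
  have hsplit : log ((a + c) / c) = log ((a + c) / (2 * c)) + log 2 := by
    rw [← log_mul (by positivity) two_ne_zero]
    field_simp
  have hlb : 1 - 2 * c / (a + c) ≤ log ((a + c) / (2 * c)) := by
    simpa only [inv_div] using one_sub_inv_le_log_of_pos (x := (a + c) / (2 * c)) (by positivity)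
  have hlin : (a + c) * (1 - 2 * c / (a + c)) = a - c := by
    field_simp
    ring
  have hlog2 : log 2 < 1 := by linarith [log_two_lt_d9]
  rw [hsplit, mul_add]
  nlinarith [mul_le_mul_of_nonneg_left hlb hac.le,
    mul_le_mul_of_nonneg_left hlog2.le (sub_nonneg.mpr hca)]

lemma freedmanH_le_exp_neg {a b : ℝ} (hb : b ≠ 0) (hba : b ^ 2 ≤ a) :
    freedmanH a b ≤ exp (-((2 * log 2 - 1) * a)) := by
  have hc : 0 < b ^ 2 := by positivity
  have hac : 0 < a + b ^ 2 := by linarith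
  rw [freedmanH_eq_exp hb hac, exp_le_exp, log_div hc.ne' hac.ne']
  have key := two_mul_mul_log_two_le hc hba
  rw [log_div hac.ne' hc.ne'] at key
  nlinarith

lemma exp_neg_le_one_div_one_add {x : ℝ} (hx : 0 ≤ x) : exp (-x) ≤ 1 / (1 + x) := by
  rw [exp_neg, inv_eq_one_div]
  exact one_div_le_one_div_of_le (by positivity) (by linarith [add_one_le_exp x])

lemma one_div_one_add_le_one_sub_div {φ δ B lam : ℝ} (hφ : 0 < φ) (hδ : 0 < δ) (hlam : 0 ≤ lam)
    (h : lam ≤ B - δ / φ) :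
    1 / (1 + φ * (lam / δ)) ≤ 1 - lam / B := by
  have hδφ : δ ≤ φ * (B - lam) := by
    rw [le_sub_iff_add_le, ← le_sub_iff_add_le', div_le_iff₀ hφ] at h
    linarith
  have hBlam : 0 < B - lam := pos_of_mul_pos_right (hδ.trans_le hδφ) hφ.le
  have hB : 0 < B := by linarith
  have hlhs : 1 / (1 + φ * (lam / δ)) = δ / (δ + φ * lam) := by
    field_simp
  have hrhs : 1 - lam / B = (B - lam) / B := by
    field_simp
  rw [hlhs, hrhs, div_le_div_iff₀ (by positivity) hB]
  nlinarith [mul_le_mul_of_nonneg_left hδφ hlam]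

theorem freedman_villes_comparison_general
    (σ δ B lam K : ℝ) (hσ : 0 < σ) (hδ : 0 < δ)
    (hK : 1 ≤ K)
    (h1 : σ ^ 2 * K ≤ lam * δ)
    (h2 : lam ≤ B - δ / (2 * Real.log 2 - 1)) :
    freedmanH (lam / δ) (σ * Real.sqrt K / δ) ≤ 1 - lam / B := by
  have hφ : 0 < 2 * log 2 - 1 := by linarith [log_two_gt_d9]
  have hlam : 0 < lam := pos_of_mul_pos_left ((by positivity : 0 < σ ^ 2 * K).trans_le h1) hδ.le
  have hb : σ * sqrt K / δ ≠ 0 := by positivity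
  have hba : (σ * sqrt K / δ) ^ 2 ≤ lam / δ := by
    rw [div_pow, mul_pow, sq_sqrt (by linarith), div_le_div_iff₀ (by positivity) hδ]
    nlinarith
  calc freedmanH (lam / δ) (σ * sqrt K / δ)
      ≤ exp (-((2 * log 2 - 1) * (lam / δ))) := freedmanH_le_exp_neg hb hba
    _ ≤ 1 / (1 + (2 * log 2 - 1) * (lam / δ)) := exp_neg_le_one_div_one_add (by positivity)
    _ ≤ 1 - lam / B := one_div_one_add_le_one_sub_div hφ hδ hlam.le h2

/-- Bound-tightness comparison: if `λδ ≥ σ²K` and `λ ≤ B − δ/φ` with `φ = 2 ln 2 − 1`,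
then the Freedman-based bound `H(λ/δ, σ√K/δ)` is at most the Ville's-based bound
`1 − λ/B`. -/
theorem freedman_villes_comparison
    (σ δ B lam K : ℝ) (hσ : 0 < σ) (hδ : 0 < δ) (hB : 0 < B)
    (hlam : 0 ≤ lam) (hK : 1 ≤ K)
    (h1 : σ ^ 2 * K ≤ lam * δ)
    (h2 : lam ≤ B - δ / (2 * Real.log 2 - 1)) :
    freedmanH (lam / δ) (σ * Real.sqrt K / δ) ≤ 1 - lam / B :=
  freedman_villes_comparison_general σ δ B lam K hσ hδ hK h1 h2
end

section
/- The function Δ(λ, B, σ², K, δ) = 1 − λ/B − (σ²K/(λδ + σ²K))^{(σ²K + λδ)/δ²} e^{λ/δ} is monotonically nonincreasing in σ² for σ², λ, δ, B, K > 0. Specifically, ∂Δ/∂(σ²) = a·b with a = −(e^{λ/δ}/(δ²σ²))(σ²K/(λδ+σ²K))^{(λδ+σ²K)/δ²} < 0 and b = σ²K ln(σ²K/(λδ+σ²K)) + λδ ≥ 0. -/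
open Real

/-!
Writing `x = σ²K` and `c = λδ`, the variable part of `Δ` is `g x = (x / (c + x)) ^ ((x + c) / δ²)`.
Logarithmic differentiation gives `g' x = g x / (δ² x) · (x log (x / (c + x)) + c)`, because the
derivative of `log (x / (c + x))` is `c / (x (c + x))`; the chain rule through `x = σ²K` turns the
prefactor into `g / (δ² σ²)`. The bracket is nonnegative by `log r ≥ 1 - 1/r`.
-/

theorem sub_le_mul_log_div {x y : ℝ} (hx : 0 < x) (hy : 0 < y) : x - y ≤ x * log (x / y) := by
  have h := one_sub_inv_le_log_of_pos (div_pos hx hy)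
  rw [inv_div] at h
  calc x - y = x * (1 - y / x) := by field_simp
    _ ≤ x * log (x / y) := mul_le_mul_of_nonneg_left h hx.le

theorem hasDerivAt_div_add_rpow {x c d : ℝ} (hx : 0 < x) (hcx : 0 < c + x) (hd : d ≠ 0) :
    HasDerivAt (fun y : ℝ => (y / (c + y)) ^ ((y + c) / d))
      ((x / (c + x)) ^ ((x + c) / d) / (d * x) * (x * log (x / (c + x)) + c)) x := by
  have hbase : HasDerivAt (fun y : ℝ => y / (c + y)) ((1 * (c + x) - x * 1) / (c + x) ^ 2) x :=
    (hasDerivAt_id x).div ((hasDerivAt_id x).const_add c) hcx.ne'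
  have hexp : HasDerivAt (fun y : ℝ => (y + c) / d) (1 / d) x :=
    ((hasDerivAt_id x).add_const c).div_const d
  refine (hbase.rpow hexp (div_pos hx hcx)).congr_deriv ?_
  rw [rpow_sub (div_pos hx hcx), rpow_one]
  field_simp
  ring

theorem hasDerivAt_div_add_rpow_comp_mul {s K c d : ℝ} (hs : 0 < s) (hK : 0 < K)
    (hc : 0 ≤ c) (hd : d ≠ 0) :
    HasDerivAt (fun t : ℝ => (t * K / (c + t * K)) ^ ((t * K + c) / d))
      ((s * K / (c + s * K)) ^ ((s * K + c) / d) / (d * s) *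
        (s * K * log (s * K / (c + s * K)) + c)) s := by
  have hsK : 0 < s * K := mul_pos hs hK
  refine ((hasDerivAt_div_add_rpow (c := c) hsK (by positivity) hd).comp s
    ((hasDerivAt_id s).mul_const K)).congr_deriv ?_
  field_simp

theorem antitoneOn_Ioi_of_hasDerivAt_nonpos {f f' : ℝ → ℝ} {a : ℝ}
    (hf : ∀ x, a < x → HasDerivAt f (f' x) x) (hf' : ∀ x, a < x → f' x ≤ 0) :
    AntitoneOn f (Set.Ioi a) :=
  antitoneOn_of_hasDerivWithinAt_nonpos (convex_Ioi a)
    (fun x hx => (hf x hx).continuousAt.continuousWithinAt)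
    (fun x hx => (hf x (by rwa [interior_Ioi] at hx)).hasDerivWithinAt)
    (fun x hx => hf' x (by rwa [interior_Ioi] at hx))

theorem delta_antitone_in_variance_general
    (lam B K δ : ℝ) (hlam : 0 < lam) (hδ : 0 < δ) (hK : 1 ≤ K) :
    (∀ s : ℝ, 0 < s →
      HasDerivAt
        (fun t : ℝ => 1 - lam / B -
          (t * K / (lam * δ + t * K)) ^ ((t * K + lam * δ) / δ ^ 2) *
            Real.exp (lam / δ))
        ((-(Real.exp (lam / δ) / (δ ^ 2 * s)) *
            (s * K / (lam * δ + s * K)) ^ ((lam * δ + s * K) / δ ^ 2)) *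
          (s * K * Real.log (s * K / (lam * δ + s * K)) + lam * δ)) s
      ∧ (-(Real.exp (lam / δ) / (δ ^ 2 * s)) *
            (s * K / (lam * δ + s * K)) ^ ((lam * δ + s * K) / δ ^ 2)) < 0
      ∧ 0 ≤ s * K * Real.log (s * K / (lam * δ + s * K)) + lam * δ)
    ∧ AntitoneOn
        (fun t : ℝ => 1 - lam / B -
          (t * K / (lam * δ + t * K)) ^ ((t * K + lam * δ) / δ ^ 2) *
            Real.exp (lam / δ))
        (Set.Ioi (0 : ℝ)) := by
  have hK0 : 0 < K := one_pos.trans_le hK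
  have hc : 0 < lam * δ := mul_pos hlam hδ
  have hderiv : ∀ s : ℝ, 0 < s → HasDerivAt
      (fun t : ℝ => 1 - lam / B -
        (t * K / (lam * δ + t * K)) ^ ((t * K + lam * δ) / δ ^ 2) * exp (lam / δ))
      ((-(exp (lam / δ) / (δ ^ 2 * s)) *
          (s * K / (lam * δ + s * K)) ^ ((lam * δ + s * K) / δ ^ 2)) *
        (s * K * log (s * K / (lam * δ + s * K)) + lam * δ)) s := fun s hs =>
    (((hasDerivAt_div_add_rpow_comp_mul hs hK0 hc.le (pow_ne_zero 2 hδ.ne')).mul_const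
      (exp (lam / δ))).const_sub (1 - lam / B)).congr_deriv (by rw [add_comm (s * K)]; ring)
  have hfactor_neg : ∀ s : ℝ, 0 < s → -(exp (lam / δ) / (δ ^ 2 * s)) *
      (s * K / (lam * δ + s * K)) ^ ((lam * δ + s * K) / δ ^ 2) < 0 := fun s hs =>
    mul_neg_of_neg_of_pos (neg_neg_of_pos (by positivity)) (rpow_pos_of_pos (by positivity) _)
  have hbracket_nonneg : ∀ s : ℝ, 0 < s →
      0 ≤ s * K * log (s * K / (lam * δ + s * K)) + lam * δ := fun s hs => by
    linarith [sub_le_mul_log_div (mul_pos hs hK0) (show 0 < lam * δ + s * K by positivity)]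
  refine ⟨fun s hs => ⟨hderiv s hs, hfactor_neg s hs, hbracket_nonneg s hs⟩, ?_⟩
  exact antitoneOn_Ioi_of_hasDerivAt_nonpos hderiv fun s hs =>
    mul_nonpos_of_nonpos_of_nonneg (hfactor_neg s hs).le (hbracket_nonneg s hs)

/-- The function `Δ(σ²) = 1 − λ/B − (σ²K/(λδ + σ²K))^{(σ²K + λδ)/δ²} e^{λ/δ}` is
monotonically nonincreasing in `σ²`; its derivative is `a·b` with
`a = −(e^{λ/δ}/(δ²σ²))(σ²K/(λδ+σ²K))^{(λδ+σ²K)/δ²} < 0` and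
`b = σ²K ln(σ²K/(λδ+σ²K)) + λδ ≥ 0`. -/
theorem delta_antitone_in_variance
    (lam B K δ : ℝ) (hlam : 0 < lam) (hB : 0 < B) (hδ : 0 < δ) (hK : 1 ≤ K) :
    (∀ s : ℝ, 0 < s →
      HasDerivAt
        (fun t : ℝ => 1 - lam / B -
          (t * K / (lam * δ + t * K)) ^ ((t * K + lam * δ) / δ ^ 2) *
            Real.exp (lam / δ))
        ((-(Real.exp (lam / δ) / (δ ^ 2 * s)) *
            (s * K / (lam * δ + s * K)) ^ ((lam * δ + s * K) / δ ^ 2)) *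
          (s * K * Real.log (s * K / (lam * δ + s * K)) + lam * δ)) s
      ∧ (-(Real.exp (lam / δ) / (δ ^ 2 * s)) *
            (s * K / (lam * δ + s * K)) ^ ((lam * δ + s * K) / δ ^ 2)) < 0
      ∧ 0 ≤ s * K * Real.log (s * K / (lam * δ + s * K)) + lam * δ)
    ∧ AntitoneOn
        (fun t : ℝ => 1 - lam / B -
          (t * K / (lam * δ + t * K)) ^ ((t * K + lam * δ) / δ ^ 2) *
            Real.exp (lam / δ))
        (Set.Ioi (0 : ℝ)) :=
  delta_antitone_in_variance_general lam B K δ hlam hδ hK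
end

section
/- Input-to-state safety: Suppose for α ∈ [0,1), δ > 0, and all k: E[h(x_{k+1}) | F_k] ≥ α h(x_k) and E[h(x_{k+1}) | F_k] − h(x_{k+1}) ≤ δ almost surely. Then almost surely h(x_k) ≥ α^k h(x_0) − Σ_{i=0}^{k−1} α^i δ for all k ≥ 0, and consequently the set {x : h(x) ≥ −δ/(1−α)} is forward invariant almost surely. -/
open MeasureTheory Filter

/-- Input-to-state safety: if `E[h(x_{k+1}) | ℱ_k] ≥ α h(x_k)` and
`E[h(x_{k+1}) | ℱ_k] − h(x_{k+1}) ≤ δ` a.s. for all `k`, with `α ∈ [0,1)` and `δ > 0`,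
then a.s. `h(x_k) ≥ α^k h(x_0) − Σ_{i<k} α^i δ` for all `k`, and the set
`{x : h(x) ≥ −δ/(1−α)}` is forward invariant a.s.  Here `Y k = h(x_k)`, `y0 = h(x_0)`. -/
theorem input_to_state_safety
    {Ω : Type*} {m0 : MeasurableSpace Ω} {μ : Measure Ω} [IsProbabilityMeasure μ]
    (ℱ : Filtration ℕ m0) (Y : ℕ → Ω → ℝ)
    (hadp : Adapted ℱ Y) (hint : ∀ k, Integrable (Y k) μ)
    (y0 : ℝ) (hY0 : Y 0 = fun _ => y0)
    (α δ : ℝ) (hα : α ∈ Set.Ico (0 : ℝ) 1) (hδ : 0 < δ)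
    (hcbf : ∀ k : ℕ, ∀ᵐ ω ∂μ, α * Y k ω ≤ (μ[Y (k + 1) | ℱ k]) ω)
    (hjump : ∀ k : ℕ, ∀ᵐ ω ∂μ, (μ[Y (k + 1) | ℱ k]) ω - Y (k + 1) ω ≤ δ) :
    (∀ᵐ ω ∂μ, ∀ k : ℕ,
      α ^ k * y0 - (∑ i ∈ Finset.range k, α ^ i) * δ ≤ Y k ω)
    ∧ (-δ / (1 - α) ≤ y0 → ∀ᵐ ω ∂μ, ∀ k : ℕ, -δ / (1 - α) ≤ Y k ω) := by
  obtain ⟨hα0, hα1⟩ := hα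
  have h1α : 0 < 1 - α := by linarith
  have key : ∀ᵐ ω ∂μ, ∀ k, α * Y k ω - δ ≤ Y (k + 1) ω := by
    rw [ae_all_iff]
    intro k
    filter_upwards [hcbf k, hjump k] with ω h1 h2
    linarith
  have main : ∀ᵐ ω ∂μ, ∀ k : ℕ,
      α ^ k * y0 - (∑ i ∈ Finset.range k, α ^ i) * δ ≤ Y k ω := by
    filter_upwards [key] with ω hω
    intro k
    induction k with
    | zero => simp [hY0]
    | succ k ih =>
      have h1 := hω k
      have h2 := mul_le_mul_of_nonneg_left ih hα0
      have hS : (∑ i ∈ Finset.range (k + 1), α ^ i)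
          = α * (∑ i ∈ Finset.range k, α ^ i) + 1 := geom_sum_succ
      rw [hS, pow_succ]
      nlinarith
  refine ⟨main, fun hy0 => ?_⟩
  filter_upwards [main] with ω hω
  intro k
  refine le_trans ?_ (hω k)
  have hgs : (∑ i ∈ Finset.range k, α ^ i) = (1 - α ^ k) / (1 - α) := by
    rw [geom_sum_eq (ne_of_lt hα1), ← neg_sub 1 (α ^ k), ← neg_sub 1 α, neg_div_neg_eq]
  have hpk : 0 ≤ α ^ k := pow_nonneg hα0 k
  have hpow : α ^ k * (-δ / (1 - α)) ≤ α ^ k * y0 :=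
    mul_le_mul_of_nonneg_left hy0 hpk
  have hpow2 : -(α ^ k * δ) ≤ α ^ k * y0 * (1 - α) := by
    have := mul_le_mul_of_nonneg_right hpow (le_of_lt h1α)
    calc -(α ^ k * δ) = α ^ k * (-δ / (1 - α)) * (1 - α) := by
          field_simp
      _ ≤ α ^ k * y0 * (1 - α) := this
  rw [hgs, div_le_iff₀ h1α]
  have hc : (1 - α ^ k) / (1 - α) * δ * (1 - α) = (1 - α ^ k) * δ := by
    field_simp
  rw [sub_mul, hc]
  linarith
end
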